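/- Let a, b be nonzero vectors in R^d with ||a - b||_2 ≤ T and 0 ≤ T ≤ ||a||_2. Then the cosine distance 1 - ⟨a,b⟩/(||a||_2 ||b||_2) is at most 1 - sqrt(1 - T²/||a||_2²). -/
import Mathlib


open Finset Matrix

theorem cosine_distance_le_of_dist_le {d : ℕ} (a b : Fin d → ℝ) (ha : a ≠ 0) (hb : b ≠ 0)
    (T : ℝ) (hT0 : 0 ≤ T) (hTa : T ≤ Real.sqrt (∑ i, a i ^ 2))
    (hdist : Real.sqrt (∑ i, (a i - b i) ^ 2) ≤ T) :
    1 - a ⬝ᵥ b / (Real.sqrt (∑ i, a i ^ 2) * Real.sqrt (∑ i, b i ^ 2))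
      ≤ 1 - Real.sqrt (1 - T ^ 2 / (∑ i, a i ^ 2)) := by
  have hA2 : 0 < ∑ i, a i ^ 2 := by
    obtain ⟨i, hi⟩ := Function.ne_iff.mp ha
    exact Finset.sum_pos' (fun j _ => sq_nonneg _) ⟨i, Finset.mem_univ i, by nlinarith [sq_abs (a i), abs_pos.mpr hi]⟩
  have hB2 : 0 < ∑ i, b i ^ 2 := by
    obtain ⟨i, hi⟩ := Function.ne_iff.mp hb
    exact Finset.sum_pos' (fun j _ => sq_nonneg _) ⟨i, Finset.mem_univ i, by nlinarith [sq_abs (b i), abs_pos.mpr hi]⟩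
  set A2 := ∑ i, a i ^ 2 with hA2def
  set B2 := ∑ i, b i ^ 2 with hB2def
  have hD : ∑ i, (a i - b i) ^ 2 = A2 + B2 - 2 * (a ⬝ᵥ b) := by
    rw [hA2def, hB2def, dotProduct, Finset.mul_sum, ← Finset.sum_add_distrib,
      ← Finset.sum_sub_distrib]
    exact Finset.sum_congr rfl fun i _ => by ring
  have h0 : (0:ℝ) ≤ ∑ i, (a i - b i) ^ 2 := Finset.sum_nonneg fun i _ => sq_nonneg _
  have hd2 : ∑ i, (a i - b i) ^ 2 ≤ T ^ 2 := by
    nlinarith [Real.sq_sqrt h0, Real.sqrt_nonneg (∑ i, (a i - b i) ^ 2)]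
  have hT2 : T ^ 2 ≤ A2 := by
    nlinarith [Real.sq_sqrt hA2.le]
  set s := Real.sqrt (A2 - T ^ 2) with hsdef
  have hs : s ^ 2 = A2 - T ^ 2 := Real.sq_sqrt (by linarith)
  have hsB : (Real.sqrt B2) ^ 2 = B2 := Real.sq_sqrt hB2.le
  have hdot : s * Real.sqrt B2 ≤ a ⬝ᵥ b := by
    nlinarith [sq_nonneg (s - Real.sqrt B2)]
  have hsApos : 0 < Real.sqrt A2 := Real.sqrt_pos.mpr hA2
  have hsBpos : 0 < Real.sqrt B2 := Real.sqrt_pos.mpr hB2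
  have key : Real.sqrt (1 - T ^ 2 / A2) ≤ a ⬝ᵥ b / (Real.sqrt A2 * Real.sqrt B2) := by
    have h1 : 1 - T ^ 2 / A2 = (A2 - T ^ 2) / A2 := by field_simp
    rw [h1, Real.sqrt_div (by linarith), ← hsdef]
    rw [div_le_div_iff₀ hsApos (by positivity)]
    nlinarith [hdot, hsApos]
  linarith
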